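/- There exists a constant C > 0 depending only on γ such that for all t ≥ 0 and all n ≥ 1: (1/(n+1)) Σ_{k ∈ T̂_n} sin²(πk) · exp(−2t sin²(πk)/γ) ≤ C/(1 + t)^{3/2}. -/

import Mathlib

/-!
Since `y e^{-y} ≤ 1`, each summand is at most `(γ/t) e^{-t sin²(πk)/γ}`. Jordan's inequality
`sin (πx) ≥ 2 min(x, 1 - x)` bounds the remaining sum of exponentials by two Gaussian sums, each
dominated by a half-line Gaussian integral of size `(n + 1) O(t^{-1/2})`. So the average is
`O(t^{-3/2})`, and for small `t` it is trivially at most `1`.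
-/

open Finset Real

theorem mul_exp_neg_two_mul_le {c : ℝ} (hc : 0 < c) (x : ℝ) :
    x * exp (-(2 * c * x)) ≤ exp (-(c * x)) / c := by
  have hy : c * x * exp (-(c * x)) ≤ 1 := by
    rw [exp_neg, ← div_eq_mul_inv, div_le_one (exp_pos _)]
    linarith [add_one_le_exp (c * x)]
  calc x * exp (-(2 * c * x)) = c * x * exp (-(c * x)) * exp (-(c * x)) / c := by
        rw [mul_assoc (c * x), ← exp_add]; field_simp; ring_nf
    _ ≤ 1 * exp (-(c * x)) / c := by gcongr
    _ = exp (-(c * x)) / c := by rw [one_mul]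

theorem two_mul_le_sin_pi_mul {x : ℝ} (hx₀ : 0 ≤ x) (hx : x ≤ 1 / 2) : 2 * x ≤ sin (π * x) := by
  have := mul_le_sin (x := π * x) (by positivity) (by nlinarith [pi_pos])
  rwa [← mul_assoc, div_mul_cancel₀ _ pi_ne_zero] at this

theorem exp_neg_mul_sin_pi_mul_sq_le {c x : ℝ} (hc : 0 ≤ c) (hx₀ : 0 ≤ x) (hx₁ : x ≤ 1) :
    exp (-(c * sin (π * x) ^ 2)) ≤ exp (-(4 * c * x ^ 2)) + exp (-(4 * c * (1 - x) ^ 2)) := by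
  rcases le_total x (1 / 2) with hx | hx
  · have hs := two_mul_le_sin_pi_mul hx₀ hx
    calc exp (-(c * sin (π * x) ^ 2)) ≤ exp (-(4 * c * x ^ 2)) := by
          refine exp_le_exp.2 (neg_le_neg ?_)
          nlinarith [mul_le_mul_of_nonneg_left (pow_le_pow_left₀ (by positivity) hs 2) hc]
      _ ≤ _ := le_add_of_nonneg_right (exp_pos _).le
  · have hs := two_mul_le_sin_pi_mul (x := 1 - x) (by linarith) (by linarith)
    rw [mul_one_sub π x, sin_pi_sub] at hs
    calc exp (-(c * sin (π * x) ^ 2)) ≤ exp (-(4 * c * (1 - x) ^ 2)) := by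
          refine exp_le_exp.2 (neg_le_neg ?_)
          nlinarith [mul_le_mul_of_nonneg_left (pow_le_pow_left₀ (by linarith) hs 2) hc]
      _ ≤ _ := le_add_of_nonneg_left (exp_pos _).le

theorem sum_range_exp_neg_mul_sq_le {a : ℝ} (ha : 0 < a) (N : ℕ) :
    ∑ i ∈ range N, exp (-a * ((i : ℝ) + 1) ^ 2) ≤ √(π / a) / 2 := by
  have hanti : AntitoneOn (fun x : ℝ => exp (-a * x ^ 2)) (Set.Icc 0 (0 + N)) := by
    intro x hx y hy hxy
    have hsq : x ^ 2 ≤ y ^ 2 := pow_le_pow_left₀ hx.1 hxy 2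
    exact exp_le_exp.2 (by nlinarith)
  calc ∑ i ∈ range N, exp (-a * ((i : ℝ) + 1) ^ 2)
      ≤ ∫ x in (0 : ℝ)..0 + N, exp (-a * x ^ 2) := by
        simpa using hanti.sum_le_integral
    _ ≤ ∫ x in Set.Ioi (0 : ℝ), exp (-a * x ^ 2) := by
        rw [zero_add, intervalIntegral.integral_of_le (Nat.cast_nonneg N)]
        exact MeasureTheory.setIntegral_mono_set (integrable_exp_neg_mul_sq ha).integrableOn
          (.of_forall fun x => (exp_pos _).le) Set.Ioc_subset_Ioi_self.eventuallyLE
    _ = √(π / a) / 2 := integral_gaussian_Ioi a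

theorem sum_range_exp_neg_mul_sin_sq_le {c : ℝ} (hc : 0 < c) (n : ℕ) :
    ∑ i ∈ range n, exp (-(c * sin (π * (((i : ℝ) + 1) / (n + 1))) ^ 2)) ≤ (n + 1) / √c := by
  set a := 4 * c / ((n : ℝ) + 1) ^ 2
  have ha : 0 < a := by positivity
  let g : ℕ → ℝ := fun i => exp (-a * ((i : ℝ) + 1) ^ 2)
  have hterm : ∀ i ∈ range n,
      exp (-(c * sin (π * (((i : ℝ) + 1) / (n + 1))) ^ 2)) ≤ g i + g (n - 1 - i) := by
    intro i hi
    have hi : i < n := mem_range.1 hi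
    have hx : ((i : ℝ) + 1) / (n + 1) ≤ 1 := by
      rw [div_le_one (by positivity)]; exact_mod_cast (by omega : i + 1 ≤ n + 1)
    convert exp_neg_mul_sin_pi_mul_sq_le hc.le (by positivity) hx using 3
    · simp only [a]; field_simp
    · rw [Nat.cast_sub (by omega), Nat.cast_sub (by omega)]
      simp only [a]; field_simp; ring
  calc ∑ i ∈ range n, exp (-(c * sin (π * (((i : ℝ) + 1) / (n + 1))) ^ 2))
      ≤ ∑ i ∈ range n, (g i + g (n - 1 - i)) := sum_le_sum hterm
    _ = 2 * ∑ i ∈ range n, g i := by rw [sum_add_distrib, sum_range_reflect g n]; ring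
    _ ≤ √(π / a) := by linarith [sum_range_exp_neg_mul_sq_le ha n]
    _ ≤ √(((n : ℝ) + 1) ^ 2 / c) := by
        refine sqrt_le_sqrt ?_
        rw [div_div_eq_mul_div, div_le_div_iff₀ (by positivity) hc]
        nlinarith [mul_le_mul_of_nonneg_right pi_le_four (by positivity : 0 ≤ ((n : ℝ) + 1) ^ 2 * c)]
    _ = (n + 1) / √c := by rw [sqrt_div' _ hc.le, sqrt_sq (by positivity)]

noncomputable def sinSqExpAverage (c : ℝ) (n : ℕ) : ℝ :=
  1 / ((n : ℝ) + 1) * ∑ j ∈ range (n + 1),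
    sin (π * j / (n + 1)) ^ 2 * exp (-(2 * c * sin (π * j / (n + 1)) ^ 2))

theorem sinSqExpAverage_le_one {c : ℝ} (hc : 0 ≤ c) (n : ℕ) : sinSqExpAverage c n ≤ 1 := by
  have hterm : ∀ j ∈ range (n + 1),
      sin (π * j / (n + 1)) ^ 2 * exp (-(2 * c * sin (π * j / (n + 1)) ^ 2)) ≤ 1 := by
    intro j _
    have hexp : exp (-(2 * c * sin (π * j / (n + 1)) ^ 2)) ≤ 1 :=
      exp_le_one_iff.2 (neg_nonpos.2 (by positivity))
    simpa using mul_le_one₀ (sin_sq_le_one _) (exp_pos _).le hexp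
  have hsum := sum_le_card_nsmul _ _ _ hterm
  rw [card_range, nsmul_one, Nat.cast_add_one] at hsum
  unfold sinSqExpAverage
  rw [one_div_mul_eq_div, div_le_one (by positivity)]
  exact hsum

theorem rpow_three_halves_eq_mul_sqrt {c : ℝ} (hc : 0 < c) : c ^ (3 / 2 : ℝ) = c * √c := by
  rw [show (3 / 2 : ℝ) = 1 + 1 / 2 by norm_num, rpow_add hc, rpow_one, sqrt_eq_rpow]

theorem sinSqExpAverage_le {c : ℝ} (hc : 0 < c) (n : ℕ) :
    sinSqExpAverage c n ≤ 1 / c ^ (3 / 2 : ℝ) := by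
  have hterm : ∀ i ∈ range n,
      sin (π * ((i + 1 : ℕ) : ℝ) / (n + 1)) ^ 2 *
          exp (-(2 * c * sin (π * ((i + 1 : ℕ) : ℝ) / (n + 1)) ^ 2))
        ≤ exp (-(c * sin (π * (((i : ℝ) + 1) / (n + 1))) ^ 2)) / c := by
    intro i _
    rw [Nat.cast_add_one, ← mul_div_assoc]
    exact mul_exp_neg_two_mul_le hc _
  unfold sinSqExpAverage
  -- the `j = 0` term vanishes; the bound `mul_exp_neg_two_mul_le` would only give `1 / c` there
  rw [sum_range_succ', Nat.cast_zero, mul_zero, zero_div, sin_zero, zero_pow two_ne_zero,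
    zero_mul, add_zero]
  calc 1 / ((n : ℝ) + 1) * _
      ≤ 1 / ((n : ℝ) + 1) * ((n + 1) / √c / c) := by
        gcongr
        exact (sum_le_sum hterm).trans
          (by rw [← sum_div]; gcongr; exact sum_range_exp_neg_mul_sin_sq_le hc n)
    _ = 1 / c ^ (3 / 2 : ℝ) := by rw [rpow_three_halves_eq_mul_sqrt hc]; field_simp

theorem le_two_rpow_mul_div_one_add_rpow {x t A B p : ℝ} (hp : 0 ≤ p) (ht : 0 ≤ t)
    (hA : 0 ≤ A) (hB : 0 ≤ B) (hxA : x ≤ A) (hxB : 1 ≤ t → x ≤ B / t ^ p) :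
    x ≤ 2 ^ p * (A + B) / (1 + t) ^ p := by
  rw [le_div_iff₀ (by positivity)]
  rcases le_total t 1 with ht1 | ht1
  · calc x * (1 + t) ^ p ≤ (A + B) * 2 ^ p := by gcongr <;> linarith
      _ = 2 ^ p * (A + B) := mul_comm _ _
  rcases le_total x 0 with hx | hx
  · exact (mul_nonpos_of_nonpos_of_nonneg hx (by positivity)).trans (by positivity)
  have hxB := (le_div_iff₀ (by positivity)).1 (hxB ht1)
  calc x * (1 + t) ^ p ≤ x * (2 * t) ^ p := by gcongr; linarith
    _ = 2 ^ p * (x * t ^ p) := by rw [mul_rpow zero_le_two ht]; ring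
    _ ≤ 2 ^ p * (A + B) := by gcongr; linarith

/-- There is `C > 0` depending only on `γ` with
`(1/(n+1)) ∑_k sin²(πk) exp(−2t sin²(πk)/γ) ≤ C/(1+t)^{3/2}` for all `t ≥ 0`, `n ≥ 1`. -/
theorem stmt7 (γ : ℝ) (hγ : 0 < γ) :
    ∃ C : ℝ, 0 < C ∧ ∀ t : ℝ, 0 ≤ t → ∀ n : ℕ, 1 ≤ n →
      (1 / ((n : ℝ) + 1)) * ∑ j ∈ Finset.range (n + 1),
          Real.sin (Real.pi * j / (n + 1)) ^ 2 *
            Real.exp (-(2 * t * Real.sin (Real.pi * j / (n + 1)) ^ 2) / γ)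
        ≤ C / (1 + t) ^ ((3 : ℝ) / 2) := by
  refine ⟨2 ^ ((3 : ℝ) / 2) * (1 + γ ^ ((3 : ℝ) / 2)), by positivity, fun t ht n _ => ?_⟩
  calc _ = sinSqExpAverage (t / γ) n := by
        unfold sinSqExpAverage
        congr 1
        refine sum_congr rfl fun j _ => ?_
        congr 2
        ring
    _ ≤ _ := by
        refine le_two_rpow_mul_div_one_add_rpow (by norm_num) ht zero_le_one (by positivity)
          (sinSqExpAverage_le_one (by positivity) n) fun ht1 => ?_
        calc sinSqExpAverage (t / γ) n ≤ 1 / (t / γ) ^ ((3 : ℝ) / 2) :=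
              sinSqExpAverage_le (by positivity) n
          _ = γ ^ ((3 : ℝ) / 2) / t ^ ((3 : ℝ) / 2) := by rw [div_rpow ht hγ.le, one_div_div]
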